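/- Let d ≥ 1, ε > 0, λ ∈ ℝ, and let A : ℝ^d → ℝ^d be continuous. For Y = (y,η) ∈ ℝ^d × ℝ^d define the magnetic Weyl system (W^A_{ε,λ}(Y)φ)(x) := e^{−iε(x + y/2)·η} e^{−iλ Γ^A_ε([x, x+y])} φ(x+y) on functions φ : ℝ^d → ℂ. Then for all Y = (y,η), Z = (z,ζ) ∈ ℝ^{2d}, all φ, and all x ∈ ℝ^d: (W^A_{ε,λ}(Y)(W^A_{ε,λ}(Z)φ))(x) = e^{i(ε/2)σ(Y,Z)} · e^{−i(λ/ε)( Γ^A([εx, εx+εy]) + Γ^A([εx+εy, εx+εy+εz]) + Γ^A([εx+εy+εz, εx]) )} · (W^A_{ε,λ}(Y+Z)φ)(x), where the exponent in the middle factor is (λ/ε) times the circulation of A around the triangle with vertices εx, εx+εy, εx+εy+εz, i.e. (by Stokes) the magnetic flux of B = dA through that triangle. -/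

import Mathlib

noncomputable section
open MeasureTheory Complex

/-- `ℝ^d` -/
abbrev Vd (d : ℕ) := Fin d → ℝ

/-- Euclidean dot product. -/
def dotR {d : ℕ} (x y : Vd d) : ℝ := ∑ l, x l * y l

/-- The symplectic form `σ((x,ξ),(y,η)) = ξ·y - x·η`. -/
def symp {d : ℕ} (X Y : Vd d × Vd d) : ℝ := dotR X.2 Y.1 - dotR X.1 Y.2

/-- Circulation `Γ^A([u,v]) = Σ_l (v_l - u_l) ∫_0^1 A_l(u + s(v-u)) ds`. -/
def circA {d : ℕ} (A : Vd d → Vd d) (u v : Vd d) : ℝ :=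
  ∑ l, (v l - u l) * ∫ s in (0:ℝ)..1, A (u + s • (v - u)) l

/-- The `ε`-scaled circulation `Γ^A_ε([u,v]) := (1/ε) Γ^A([εu,εv])`. -/
def circAe {d : ℕ} (ε : ℝ) (A : Vd d → Vd d) (u v : Vd d) : ℝ :=
  ε⁻¹ * circA A (ε • u) (ε • v)

/-- The magnetic Weyl system
`(W^A_{ε,λ}(Y)φ)(x) = e^{-iε(x+y/2)·η} e^{-iλΓ^A_ε([x,x+y])} φ(x+y)`. -/
def weylSys {d : ℕ} (ε lam : ℝ) (A : Vd d → Vd d) (Y : Vd d × Vd d)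
    (φ : Vd d → ℂ) (x : Vd d) : ℂ :=
  Complex.exp (-Complex.I * ε * (∑ l, (x l + Y.1 l / 2) * Y.2 l)) *
    Complex.exp (-Complex.I * lam * circAe ε A x (x + Y.1)) * φ (x + Y.1)

/-! Each Weyl operator multiplies by a phase and translates, so the product of two of them is a
phase times the translation by `y + z`. The quadratic parts of the phases add up to that of
`W(Y + Z)` up to `-(ε/2) σ(Y,Z)`, and the circulations along `[x, x+y]` and `[x+y, x+y+z]` add up
to the one along `[x, x+y+z]` plus the circulation around the closed triangle, because reversing
a segment negates its circulation. -/

variable {d : ℕ}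

def weylPhase (ε lam : ℝ) (A : Vd d → Vd d) (Y : Vd d × Vd d) (x : Vd d) : ℝ :=
  ε * (∑ l, (x l + Y.1 l / 2) * Y.2 l) + lam * circAe ε A x (x + Y.1)

theorem weylSys_eq_exp_weylPhase (ε lam : ℝ) (A : Vd d → Vd d) (Y : Vd d × Vd d)
    (φ : Vd d → ℂ) (x : Vd d) :
    weylSys ε lam A Y φ x = Complex.exp (-Complex.I * weylPhase ε lam A Y x) * φ (x + Y.1) := by
  rw [weylSys, weylPhase, ← Complex.exp_add]
  push_cast
  ring_nf

theorem circA_swap (A : Vd d → Vd d) (u v : Vd d) : circA A v u = -circA A u v := by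
  unfold circA
  rw [← Finset.sum_neg_distrib]
  refine Finset.sum_congr rfl fun l _ => ?_
  -- the substitution `s ↦ 1 - s` runs the segment backwards
  have hreverse : (∫ s in (0:ℝ)..1, A (v + s • (u - v)) l)
      = ∫ s in (0:ℝ)..1, A (u + s • (v - u)) l := by
    have hsub := intervalIntegral.integral_comp_sub_left
      (a := 0) (b := 1) (fun s => A (u + s • (v - u)) l) (1 : ℝ)
    simp only [sub_zero, sub_self] at hsub
    rw [← hsub]
    refine intervalIntegral.integral_congr fun s _ => ?_
    congr 1
    ext i
    simp only [Pi.add_apply, Pi.smul_apply, Pi.sub_apply, smul_eq_mul]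
    ring
  rw [hreverse]
  ring

theorem circAe_add_circAe (ε : ℝ) (A : Vd d → Vd d) (x y z : Vd d) :
    circAe ε A x (x + y) + circAe ε A (x + y) (x + y + z)
      = circAe ε A x (x + y + z)
        + ε⁻¹ * (circA A (ε • x) (ε • x + ε • y)
          + circA A (ε • x + ε • y) (ε • x + ε • y + ε • z)
          + circA A (ε • x + ε • y + ε • z) (ε • x)) := by
  simp only [circAe, smul_add, circA_swap A _ (ε • x)]
  ring

theorem sum_phase_add_sum_phase (x y z η ζ : Vd d) :
    (∑ l, (x l + y l / 2) * η l) + ∑ l, ((x + y) l + z l / 2) * ζ l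
      = (∑ l, (x l + (y + z) l / 2) * (η + ζ) l) - symp (y, η) (z, ζ) / 2 := by
  simp only [symp, dotR, Pi.add_apply, ← Finset.sum_add_distrib, ← Finset.sum_sub_distrib,
    Finset.sum_div]
  refine Finset.sum_congr rfl fun l _ => ?_
  ring

theorem weylPhase_add_weylPhase (ε lam : ℝ) (A : Vd d → Vd d) (Y Z : Vd d × Vd d)
    (x : Vd d) :
    weylPhase ε lam A Y x + weylPhase ε lam A Z (x + Y.1)
      = -(ε / 2) * symp Y Z
        + lam / ε * (circA A (ε • x) (ε • x + ε • Y.1)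
          + circA A (ε • x + ε • Y.1) (ε • x + ε • Y.1 + ε • Z.1)
          + circA A (ε • x + ε • Y.1 + ε • Z.1) (ε • x))
        + weylPhase ε lam A (Y + Z) x := by
  obtain ⟨y, η⟩ := Y
  obtain ⟨z, ζ⟩ := Z
  have hcirc := circAe_add_circAe ε A x y z
  have hphase := sum_phase_add_sum_phase x y z η ζ
  simp only [weylPhase, Prod.fst_add, Prod.snd_add, ← add_assoc] at *
  rw [div_eq_mul_inv]
  linear_combination lam * hcirc + ε * hphase

theorem statement2_general (d : ℕ) (ε : ℝ) (lam : ℝ)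
    (A : Vd d → Vd d)
    (Y Z : Vd d × Vd d) (φ : Vd d → ℂ) (x : Vd d) :
    weylSys ε lam A Y (weylSys ε lam A Z φ) x
      = Complex.exp (Complex.I * (ε / 2) * symp Y Z) *
        Complex.exp (-Complex.I * (lam / ε) *
          (circA A (ε • x) (ε • x + ε • Y.1)
            + circA A (ε • x + ε • Y.1) (ε • x + ε • Y.1 + ε • Z.1)
            + circA A (ε • x + ε • Y.1 + ε • Z.1) (ε • x))) *
        weylSys ε lam A (Y + Z) φ x := by
  simp only [weylSys_eq_exp_weylPhase, Prod.fst_add, ← add_assoc, ← mul_assoc,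
    ← Complex.exp_add]
  congr 2
  have h := congrArg (fun r : ℝ => -Complex.I * (r : ℂ)) (weylPhase_add_weylPhase ε lam A Y Z x)
  push_cast at h
  linear_combination h

/-- Composition law of the magnetic Weyl system: the product of two Weyl systems is a
Weyl system times the symplectic phase and the exponential of (λ/ε times) the magnetic
circulation around the triangle with vertices `εx`, `εx+εy`, `εx+εy+εz`. -/
theorem statement2 (d : ℕ) (hd : 1 ≤ d) (ε : ℝ) (hε : 0 < ε) (lam : ℝ)
    (A : Vd d → Vd d) (hA : Continuous A)
    (Y Z : Vd d × Vd d) (φ : Vd d → ℂ) (x : Vd d) :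
    weylSys ε lam A Y (weylSys ε lam A Z φ) x
      = Complex.exp (Complex.I * (ε / 2) * symp Y Z) *
        Complex.exp (-Complex.I * (lam / ε) *
          (circA A (ε • x) (ε • x + ε • Y.1)
            + circA A (ε • x + ε • Y.1) (ε • x + ε • Y.1 + ε • Z.1)
            + circA A (ε • x + ε • Y.1 + ε • Z.1) (ε • x))) *
        weylSys ε lam A (Y + Z) φ x :=
  statement2_general d ε lam A Y Z φ x
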